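/- Let 𝒜 ⊆ 𝒫(𝒢) be nonempty and Ext(𝒜) as defined. If ∅ ∉ Ext(𝒜), then Ext(𝒜) is the minimal coherent set of desirable gamble sets extending 𝒜: 𝒜 ⊆ Ext(𝒜), Ext(𝒜) is coherent, and every coherent 𝒦 with 𝒜 ⊆ 𝒦 satisfies Ext(𝒜) ⊆ 𝒦. Moreover, if ∅ ∈ Ext(𝒜), there is no coherent 𝒦 extending 𝒜. -/

import Mathlib

open scoped BigOperators

universe u v

def GambleSpace (Ω : Type v) : Submodule ℝ (Ω → ℝ) where
  carrier := {f | ∃ M, ∀ ω, |f ω| ≤ M}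
  add_mem' := by
    rintro f g ⟨M, hM⟩ ⟨N, hN⟩
    exact ⟨M + N, fun ω => (abs_add_le _ _).trans (add_le_add (hM ω) (hN ω))⟩
  zero_mem' := ⟨0, fun ω => by simp⟩
  smul_mem' := by
    rintro c f ⟨M, hM⟩
    exact ⟨|c| * M, fun ω => by
      simpa [abs_mul] using mul_le_mul_of_nonneg_left (hM ω) (abs_nonneg c)⟩

/-- The type of gambles: bounded functions `Ω → ℝ`. -/
abbrev Gamble (Ω : Type v) := GambleSpace Ω

/-- Pointwise order on gambles: `gle f g` means `f ≤ g` pointwise. -/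
def gle {Ω : Type v} (f g : Gamble Ω) : Prop := ∀ ω, (f : Ω → ℝ) ω ≤ (g : Ω → ℝ) ω

/-- Gambles weakly dominating `0`. -/
def Gpos (Ω : Type v) : Set (Gamble Ω) := {g | gle 0 g ∧ g ≠ 0}

/-- Positive linear hull: finite positive combinations of members of `B`. -/
def posi {Ω : Type v} (B : Set (Gamble Ω)) : Set (Gamble Ω) :=
  {f | ∃ n : ℕ, 0 < n ∧ ∃ (l : Fin n → ℝ) (g : Fin n → Gamble Ω),
    (∀ i, 0 < l i) ∧ (∀ i, g i ∈ B) ∧ f = ∑ i, l i • g i}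

/-- Natural extension of a set of gambles. -/
def desext {Ω : Type v} (E : Set (Gamble Ω)) : Set (Gamble Ω) := posi (E ∪ Gpos Ω)

/-- Coherence for a set of desirable gambles. -/
def CoherentD {Ω : Type v} (D : Set (Gamble Ω)) : Prop :=
  (0 : Gamble Ω) ∉ D ∧ Gpos Ω ⊆ D ∧
  (∀ g ∈ D, ∀ l : ℝ, 0 < l → l • g ∈ D) ∧
  (∀ f ∈ D, ∀ g ∈ D, f + g ∈ D)

/-- Coherence for a set of desirable gamble sets. -/
def CoherentK {Ω : Type v} (K : Set (Set (Gamble Ω))) : Prop :=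
  (∅ : Set (Gamble Ω)) ∉ K ∧
  (∀ A ∈ K, A \ {0} ∈ K) ∧
  (∀ g ∈ Gpos Ω, ({g} : Set (Gamble Ω)) ∈ K) ∧
  (∀ A ∈ K, ∀ B : Set (Gamble Ω), A ⊆ B → B ∈ K) ∧
  (∀ A ∈ K, ∀ F : Gamble Ω → Gamble Ω, (∀ g ∈ A, gle g (F g)) → F '' A ∈ K) ∧
  (∀ n : ℕ, 0 < n → ∀ A : Fin n → Set (Gamble Ω), (∀ i, A i ∈ K) →
    ∀ F : (Fin n → Gamble Ω) → Gamble Ω,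
    (∀ g : Fin n → Gamble Ω, (∀ i, g i ∈ A i) → F g ∈ posi (Set.range g)) →
    {b | ∃ g : Fin n → Gamble Ω, (∀ i, g i ∈ A i) ∧ b = F g} ∈ K)

/-- The infinite addition axiom. -/
def KAddInf {Ω : Type v} (K : Set (Set (Gamble Ω))) : Prop :=
  ∀ (I : Type v) (A : I → Set (Gamble Ω)), (∀ i, A i ∈ K) →
    ∀ F : (I → Gamble Ω) → Gamble Ω,
    (∀ g : I → Gamble Ω, (∀ i, g i ∈ A i) → F g ∈ posi (Set.range g)) →
    {b | ∃ g : I → Gamble Ω, (∀ i, g i ∈ A i) ∧ b = F g} ∈ K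

/-- Natural extension of a set of gamble sets (nonempty case). -/
def ExtK {Ω : Type v} (𝒜 : Set (Set (Gamble Ω))) : Set (Set (Gamble Ω)) :=
  {B | ∃ n : ℕ, 0 < n ∧ ∃ A : Fin n → Set (Gamble Ω), (∀ i, A i ∈ 𝒜) ∧
    ∀ g : Fin n → Gamble Ω, (∀ i, g i ∈ A i) →
      (0 : Gamble Ω) ∉ desext (Set.range g) → ∃ f ∈ B, f ∈ desext (Set.range g)}

/-!
Minimality: given `B ∈ Ext 𝒜` witnessed by `A₁, …, Aₙ` and a coherent `K ⊇ 𝒜`, either `B` contains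
a positive gamble, or every selection `gᵢ ∈ Aᵢ` admits a positive combination of the `gᵢ` that is
dominated by `0` or by a member of `B`. Applying KAdd to these combinations and then a dominance map
sending each to `0` or to such a member of `B` yields a set in `K` whose nonzero part lies in `B`.
In particular `∅ ∈ Ext 𝒜` rules out every coherent extension. Coherence of `Ext 𝒜` itself holds
because `desext` is monotone, upward closed and closed under `posi`.
-/

open Set

section Gambles

variable {Ω : Type v}

lemma gle_add {a b c d : Gamble Ω} (hab : gle a b) (hcd : gle c d) : gle (a + c) (b + d) :=
  fun ω => by simpa using add_le_add (hab ω) (hcd ω)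

lemma gle_smul {a b : Gamble Ω} {c : ℝ} (hc : 0 ≤ c) (hab : gle a b) : gle (c • a) (c • b) :=
  fun ω => by simpa using mul_le_mul_of_nonneg_left (hab ω) hc

lemma zero_notMem_gpos : (0 : Gamble Ω) ∉ Gpos Ω := fun h => h.2 rfl

lemma add_mem_gpos {f g : Gamble Ω} (hf : f ∈ Gpos Ω) (hg : g ∈ Gpos Ω) : f + g ∈ Gpos Ω := by
  refine ⟨by simpa using gle_add hf.1 hg.1, fun hfg => hf.2 (Subtype.ext (funext fun ω => ?_))⟩
  have hsum : (f : Ω → ℝ) ω + (g : Ω → ℝ) ω = 0 := by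
    simpa using congrFun (congrArg Subtype.val hfg) ω
  have hf0 : 0 ≤ (f : Ω → ℝ) ω := by simpa using hf.1 ω
  have hg0 : 0 ≤ (g : Ω → ℝ) ω := by simpa using hg.1 ω
  simp only [ZeroMemClass.coe_zero, Pi.zero_apply]
  linarith

lemma smul_mem_gpos {f : Gamble Ω} {c : ℝ} (hc : 0 < c) (hf : f ∈ Gpos Ω) : c • f ∈ Gpos Ω :=
  ⟨by simpa using gle_smul hc.le hf.1, smul_ne_zero hc.ne' hf.2⟩

lemma sub_mem_gpos {f g : Gamble Ω} (hfg : gle f g) (hne : g ≠ f) : g - f ∈ Gpos Ω :=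
  ⟨fun ω => by simpa using hfg ω, sub_ne_zero.mpr hne⟩

variable {E E' : Set (Gamble Ω)}

lemma subset_posi : E ⊆ posi E :=
  fun f hf => ⟨1, one_pos, fun _ => 1, fun _ => f, fun _ => one_pos, fun _ => hf, by simp⟩

lemma posi_mono (h : E ⊆ E') : posi E ⊆ posi E' := by
  rintro f ⟨n, hn, l, g, hl, hg, rfl⟩
  exact ⟨n, hn, l, g, hl, fun i => h (hg i), rfl⟩

lemma posi_add {f g : Gamble Ω} (hf : f ∈ posi E) (hg : g ∈ posi E) : f + g ∈ posi E := by
  obtain ⟨n, hn, l, u, hl, hu, rfl⟩ := hf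
  obtain ⟨m, -, l', u', hl', hu', rfl⟩ := hg
  refine ⟨n + m, by omega, Fin.append l l', Fin.append u u',
    fun i => Fin.addCases (fun j => by simpa using hl j) (fun j => by simpa using hl' j) i,
    fun i => Fin.addCases (fun j => by simpa using hu j) (fun j => by simpa using hu' j) i, ?_⟩
  simp [Fin.sum_univ_add]

lemma posi_smul {f : Gamble Ω} {c : ℝ} (hc : 0 < c) (hf : f ∈ posi E) : c • f ∈ posi E := by
  obtain ⟨n, hn, l, u, hl, hu, rfl⟩ := hf
  exact ⟨n, hn, fun i => c * l i, u, fun i => mul_pos hc (hl i), hu, by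
    simp [Finset.smul_sum, mul_smul]⟩

def posiCone (E : Set (Gamble Ω)) : ConvexCone ℝ (Gamble Ω) where
  carrier := posi E
  smul_mem' _ hc _ hf := posi_smul hc hf
  add_mem' _ hf _ hg := posi_add hf hg

lemma posi_subset_of_subset_cone {C : ConvexCone ℝ (Gamble Ω)} (h : E ⊆ C) : posi E ⊆ C := by
  rintro f ⟨n, hn, l, g, hl, hg, rfl⟩
  exact Finset.sum_induction_nonempty _ (· ∈ C) (fun _ _ ha hb => C.add_mem ha hb)
    (Finset.univ_nonempty_iff.2 ⟨⟨0, hn⟩⟩) (fun i _ => C.smul_mem (hl i) (h (hg i)))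

lemma posi_posi_subset : posi (posi E) ⊆ posi E :=
  posi_subset_of_subset_cone (C := posiCone E) subset_rfl

lemma subset_desext : E ⊆ desext E :=
  subset_union_left.trans subset_posi

lemma gpos_subset_desext : Gpos Ω ⊆ desext E :=
  subset_union_right.trans subset_posi

lemma desext_mono (h : E ⊆ E') : desext E ⊆ desext E' :=
  posi_mono (union_subset_union_left _ h)

lemma posi_desext_subset : posi (desext E) ⊆ desext E :=
  posi_posi_subset

lemma mem_desext_of_gle {f g : Gamble Ω} (hf : f ∈ desext E) (hfg : gle f g) : g ∈ desext E := by
  by_cases hgf : g = f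
  · rwa [hgf]
  · rw [← add_sub_cancel f g]
    exact posi_add hf (gpos_subset_desext (sub_mem_gpos hfg hgf))

def dominatorCone (E : Set (Gamble Ω)) : ConvexCone ℝ (Gamble Ω) where
  carrier := Gpos Ω ∪ {f | ∃ h ∈ posi E, gle h f}
  smul_mem' c hc f := by
    rintro (hf | ⟨h, hh, hhf⟩)
    · exact .inl (smul_mem_gpos hc hf)
    · exact .inr ⟨c • h, posi_smul hc hh, gle_smul hc.le hhf⟩
  add_mem' f := by
    rintro (hf | ⟨h, hh, hhf⟩) g (hg | ⟨h', hh', hhg⟩)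
    · exact .inl (add_mem_gpos hf hg)
    · exact .inr ⟨h', hh', by simpa using gle_add hf.1 hhg⟩
    · exact .inr ⟨h, hh, by simpa using gle_add hhf hg.1⟩
    · exact .inr ⟨h + h', posi_add hh hh', gle_add hhf hhg⟩

lemma mem_gpos_or_exists_gle_of_mem_desext {f : Gamble Ω} (hf : f ∈ desext E) :
    f ∈ Gpos Ω ∨ ∃ h ∈ posi E, gle h f := by
  refine posi_subset_of_subset_cone (C := dominatorCone E) (union_subset ?_ ?_) hf
  · exact fun e he => .inr ⟨e, subset_posi he, fun _ => le_rfl⟩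
  · exact fun p hp => .inl hp

end Gambles

section Extension

variable {Ω : Type v} {𝒜 : Set (Set (Gamble Ω))}

lemma subset_extK : 𝒜 ⊆ ExtK 𝒜 := fun A hA =>
  ⟨1, one_pos, fun _ => A, fun _ => hA, fun g hg _ => ⟨g 0, hg 0, subset_desext (mem_range_self 0)⟩⟩

lemma mem_extK_of_fintype {ι : Type*} [Fintype ι] [Nonempty ι] {B : Set (Gamble Ω)}
    (A : ι → Set (Gamble Ω)) (hA : ∀ i, A i ∈ 𝒜)
    (hB : ∀ g : ι → Gamble Ω, (∀ i, g i ∈ A i) →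
      (0 : Gamble Ω) ∉ desext (range g) → ∃ f ∈ B, f ∈ desext (range g)) :
    B ∈ ExtK 𝒜 := by
  let e := Fintype.equivFin ι
  refine ⟨Fintype.card ι, Fintype.card_pos, A ∘ e.symm, fun _ => hA _, fun g hg h0 => ?_⟩
  have hrange : range (g ∘ e) = range g := e.surjective.range_comp g
  rw [← hrange] at h0 ⊢
  exact hB (g ∘ e) (fun i => by simpa using hg (e i)) h0

lemma extK_add {n : ℕ} (hn : 0 < n) (A : Fin n → Set (Gamble Ω)) (hA : ∀ i, A i ∈ ExtK 𝒜)
    (F : (Fin n → Gamble Ω) → Gamble Ω)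
    (hF : ∀ g : Fin n → Gamble Ω, (∀ i, g i ∈ A i) → F g ∈ posi (range g)) :
    {b | ∃ g : Fin n → Gamble Ω, (∀ i, g i ∈ A i) ∧ b = F g} ∈ ExtK 𝒜 := by
  choose m hm B hB𝒜 hB using hA
  have : Nonempty (Σ i, Fin (m i)) := ⟨⟨⟨0, hn⟩, ⟨0, hm _⟩⟩⟩
  refine mem_extK_of_fintype (fun p : Σ i, Fin (m i) => B p.1 p.2) (fun p => hB𝒜 p.1 p.2)
    fun g hg h0 => ?_
  have hsel : ∀ i, ∃ f ∈ A i, f ∈ desext (range g) := by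
    intro i
    have hsub : range (fun j => g ⟨i, j⟩) ⊆ range g := range_comp_subset_range _ g
    obtain ⟨f, hfA, hf⟩ := hB i (fun j => g ⟨i, j⟩) (fun j => hg ⟨i, j⟩)
      (fun h => h0 (desext_mono hsub h))
    exact ⟨f, hfA, desext_mono hsub hf⟩
  choose f hfA hf using hsel
  exact ⟨F f, ⟨f, hfA, rfl⟩, posi_desext_subset (posi_mono (range_subset_iff.2 hf) (hF f hfA))⟩

lemma coherentK_extK (h𝒜 : 𝒜.Nonempty) (hempty : ∅ ∉ ExtK 𝒜) : CoherentK (ExtK 𝒜) := by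
  refine ⟨hempty, ?_, ?_, ?_, ?_, fun n hn => extK_add hn⟩
  · rintro B ⟨n, hn, A, hA, hB⟩
    refine ⟨n, hn, A, hA, fun g hg h0 => ?_⟩
    obtain ⟨f, hfB, hf⟩ := hB g hg h0
    exact ⟨f, ⟨hfB, fun hf0 => h0 (hf0 ▸ hf)⟩, hf⟩
  · intro p hp
    obtain ⟨A, hA⟩ := h𝒜
    exact ⟨1, one_pos, fun _ => A, fun _ => hA, fun _ _ _ => ⟨p, rfl, gpos_subset_desext hp⟩⟩
  · rintro B ⟨n, hn, A, hA, hB⟩ B' hBB'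
    exact ⟨n, hn, A, hA, fun g hg h0 => (hB g hg h0).imp fun f hf => ⟨hBB' hf.1, hf.2⟩⟩
  · rintro B ⟨n, hn, A, hA, hB⟩ G hG
    refine ⟨n, hn, A, hA, fun g hg h0 => ?_⟩
    obtain ⟨f, hfB, hf⟩ := hB g hg h0
    exact ⟨G f, mem_image_of_mem G hfB, mem_desext_of_gle hf (hG f hfB)⟩

lemma CoherentK.mem_of_forall_gle {K : Set (Set (Gamble Ω))} (hK : CoherentK K)
    {B C : Set (Gamble Ω)} (hC : C ∈ K) (hCB : ∀ c ∈ C, gle c 0 ∨ ∃ f ∈ B, gle c f) : B ∈ K := by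
  obtain ⟨-, hdiff, -, hsup, hdom, -⟩ := hK
  have hG : ∀ c, ∃ d, (gle c 0 ∨ ∃ f ∈ B, gle c f) → gle c d ∧ (d = 0 ∨ d ∈ B) := by
    intro c
    by_cases hc : ∃ f ∈ B, gle c f
    · obtain ⟨f, hfB, hcf⟩ := hc
      exact ⟨f, fun _ => ⟨hcf, .inr hfB⟩⟩
    · exact ⟨0, fun h => ⟨h.resolve_right hc, .inl rfl⟩⟩
  choose G hG using hG
  refine hsup _ (hdiff _ (hdom C hC G fun c hc => (hG c (hCB c hc)).1)) B ?_
  rintro _ ⟨⟨c, hc, rfl⟩, hc0⟩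
  exact (hG c (hCB c hc)).2.resolve_left hc0

lemma extK_subset_of_coherentK {K : Set (Set (Gamble Ω))} (hK : CoherentK K) (h𝒜K : 𝒜 ⊆ K) :
    ExtK 𝒜 ⊆ K := by
  rintro B ⟨n, hn, A, hA, hB⟩
  have ⟨_, _, hsingle, hsup, _, hadd⟩ := hK
  by_cases hpos : ∃ f ∈ B, f ∈ Gpos Ω
  · obtain ⟨f, hfB, hf⟩ := hpos
    exact hsup _ (hsingle f hf) B (singleton_subset_iff.2 hfB)
  push Not at hpos
  have hsel : ∀ g : Fin n → Gamble Ω, ∃ h, (∀ i, g i ∈ A i) →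
      h ∈ posi (range g) ∧ (gle h 0 ∨ ∃ f ∈ B, gle h f) := by
    intro g
    by_cases hg : ∀ i, g i ∈ A i
    · by_cases h0 : (0 : Gamble Ω) ∈ desext (range g)
      · obtain ⟨h, hh, hh0⟩ := (mem_gpos_or_exists_gle_of_mem_desext h0).resolve_left
          zero_notMem_gpos
        exact ⟨h, fun _ => ⟨hh, .inl hh0⟩⟩
      · obtain ⟨f, hfB, hf⟩ := hB g hg h0
        obtain ⟨h, hh, hhf⟩ := (mem_gpos_or_exists_gle_of_mem_desext hf).resolve_left
          (hpos f hfB)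
        exact ⟨h, fun _ => ⟨hh, .inr ⟨f, hfB, hhf⟩⟩⟩
    · exact ⟨0, fun h => absurd h hg⟩
  choose F hF using hsel
  refine hK.mem_of_forall_gle (hadd n hn A (fun i => h𝒜K (hA i)) F fun g hg => (hF g hg).1) ?_
  rintro _ ⟨g, hg, rfl⟩
  exact (hF g hg).2

end Extension

theorem stmt8_general {Ω : Type v} (𝒜 : Set (Set (Gamble Ω))) (h𝒜 : 𝒜.Nonempty) :
    ((∅ : Set (Gamble Ω)) ∉ ExtK 𝒜 →
      𝒜 ⊆ ExtK 𝒜 ∧ CoherentK (ExtK 𝒜) ∧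
      ∀ K : Set (Set (Gamble Ω)), CoherentK K → 𝒜 ⊆ K → ExtK 𝒜 ⊆ K) ∧
    ((∅ : Set (Gamble Ω)) ∈ ExtK 𝒜 →
      ¬ ∃ K : Set (Set (Gamble Ω)), CoherentK K ∧ 𝒜 ⊆ K) := by
  refine ⟨fun hempty => ⟨subset_extK, coherentK_extK h𝒜 hempty,
    fun K hK h𝒜K => extK_subset_of_coherentK hK h𝒜K⟩, ?_⟩
  rintro hempty ⟨K, hK, h𝒜K⟩
  exact hK.1 (extK_subset_of_coherentK hK h𝒜K hempty)

theorem stmt8 {Ω : Type v} [Nonempty Ω] (𝒜 : Set (Set (Gamble Ω))) (h𝒜 : 𝒜.Nonempty) :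
    ((∅ : Set (Gamble Ω)) ∉ ExtK 𝒜 →
      𝒜 ⊆ ExtK 𝒜 ∧ CoherentK (ExtK 𝒜) ∧
      ∀ K : Set (Set (Gamble Ω)), CoherentK K → 𝒜 ⊆ K → ExtK 𝒜 ⊆ K) ∧
    ((∅ : Set (Gamble Ω)) ∈ ExtK 𝒜 →
      ¬ ∃ K : Set (Set (Gamble Ω)), CoherentK K ∧ 𝒜 ⊆ K) :=
  stmt8_general 𝒜 h𝒜
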